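/- Let A ⊆ ℝ^n be a nonempty closed convex set, U differentiable strictly convex with Bregman divergence D, η > 0, x ∈ ℝ^n, c ∈ A, and let a* = argmin_{a ∈ A} [η⟨a, x⟩ + D(a, c)]. Then for any d ∈ A: ⟨a* − d, x⟩ ≤ (1/η)(D(d, c) − D(d, a*) − D(a*, c)). -/
import Mathlib


open RealInnerProductSpace

/-- Three-point (pushback) inequality for mirror descent: if
`a* = argmin_{a ∈ A} η⟪a, x⟫ + D(a, c)` where `D` is the Bregman divergence
of a differentiable strictly convex `U`, then for every `d ∈ A`,
`⟪a* - d, x⟫ ≤ (1/η)(D d c - D d a* - D a* c)`. -/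
theorem three_point_inequality {n : ℕ}
    (A : Set (EuclideanSpace ℝ (Fin n))) (hA : A.Nonempty) (hAc : IsClosed A)
    (hAconv : Convex ℝ A)
    (U : EuclideanSpace ℝ (Fin n) → ℝ) (g : EuclideanSpace ℝ (Fin n) → EuclideanSpace ℝ (Fin n))
    (hgrad : ∀ x, HasGradientAt U (g x) x)
    (hstrict : StrictConvexOn ℝ Set.univ U)
    (D : EuclideanSpace ℝ (Fin n) → EuclideanSpace ℝ (Fin n) → ℝ)
    (hD : ∀ a b, D a b = U a - U b - ⟪g b, a - b⟫)
    (η : ℝ) (hη : 0 < η) (x c astar : EuclideanSpace ℝ (Fin n))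
    (hc : c ∈ A) (hastar : astar ∈ A)
    (hmin : ∀ a ∈ A, η * ⟪astar, x⟫ + D astar c ≤ η * ⟪a, x⟫ + D a c) :
    ∀ d ∈ A, ⟪astar - d, x⟫ ≤ (1 / η) * (D d c - D d astar - D astar c) := by
  intro d hd
  set f : EuclideanSpace ℝ (Fin n) → ℝ := fun a => η * ⟪a, x⟫ + D a c with hf
  set f' : EuclideanSpace ℝ (Fin n) →L[ℝ] ℝ :=
    η • (innerSL ℝ x) + (innerSL ℝ (g astar) - innerSL ℝ (g c)) with hf'
  have hUf : ∀ z : EuclideanSpace ℝ (Fin n), HasFDerivAt U (innerSL ℝ (g z)) z := by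
    intro z
    have h0 := (hgrad z).hasFDerivAt
    have he : (InnerProductSpace.toDual ℝ (EuclideanSpace ℝ (Fin n)) (g z) :
        EuclideanSpace ℝ (Fin n) →L[ℝ] ℝ) = innerSL ℝ (g z) := by
      ext y; simp [InnerProductSpace.toDual_apply_apply]
    rwa [he] at h0
  have hderiv : HasFDerivAt f f' astar := by
    have h1 : HasFDerivAt (fun a : EuclideanSpace ℝ (Fin n) => η * ⟪a, x⟫)
        (η • (innerSL ℝ x)) astar := by
      have h1a : HasFDerivAt (fun a : EuclideanSpace ℝ (Fin n) => ⟪x, a⟫)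
          (innerSL ℝ x) astar := (innerSL ℝ x).hasFDerivAt
      have h1b := h1a.const_mul η
      have heq : (fun a : EuclideanSpace ℝ (Fin n) => η * ⟪a, x⟫)
          = fun a => η * ⟪x, a⟫ := by
        funext a; rw [real_inner_comm]
      rw [heq]
      convert h1b using 1
    have h2 : HasFDerivAt (fun a : EuclideanSpace ℝ (Fin n) => D a c)
        (innerSL ℝ (g astar) - innerSL ℝ (g c)) astar := by
      have h2a : HasFDerivAt (fun a : EuclideanSpace ℝ (Fin n) => ⟪g c, a⟫)
          (innerSL ℝ (g c)) astar := (innerSL ℝ (g c)).hasFDerivAt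
      have h2b := (hUf astar).sub h2a
      have h2c := h2b.add_const (⟪g c, c⟫ - U c)
      have heq : (fun a : EuclideanSpace ℝ (Fin n) => D a c)
          = fun a => (U a - ⟪g c, a⟫) + (⟪g c, c⟫ - U c) := by
        funext a; rw [hD, inner_sub_right]; ring
      rw [heq]
      exact h2c
    exact h1.add h2
  have hmem : d - astar ∈ posTangentConeAt A astar :=
    sub_mem_posTangentConeAt_of_segment_subset (hAconv.segment_subset hastar hd)
  have hminOn : IsLocalMinOn f A astar := by
    apply IsMinOn.localize
    intro a ha
    exact hmin a ha
  have hvi : 0 ≤ f' (d - astar) :=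
    hminOn.hasFDerivWithinAt_nonneg hderiv.hasFDerivWithinAt hmem
  have hvi' : 0 ≤ η * ⟪x, d - astar⟫ + (⟪g astar, d - astar⟫ - ⟪g c, d - astar⟫) := by
    simpa [hf'] using hvi
  have hDeq : D d c - D d astar - D astar c
      = ⟪g astar, d - astar⟫ - ⟪g c, d - astar⟫ := by
    simp only [hD, inner_sub_right]
    ring
  rw [hDeq]
  have h5 : ⟪astar - d, x⟫ = - ⟪x, d - astar⟫ := by
    rw [show astar - d = -(d - astar) by abel, inner_neg_left, real_inner_comm]
  rw [h5, div_mul_eq_mul_div, one_mul, le_div_iff₀ hη]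
  linarith [hvi']
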